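/- arXiv:2208.04674 — 4 statements merged into one kernel-verified Lean document; each statement's English description precedes it below -/
import Mathlib

section
/- Let $q$ be a prime power and $m \le n$ natural numbers. Then the proportion of full-rank (rank $m$) matrices among all $n \times m$ matrices over $\mathbb{F}_q$ equals $\prod_{i=1}^{m}(1 - q^{-(n-i+1)})$, and this quantity is greater than $1/4$. -/
/-!
Transposing, a full-rank `n × m` matrix is a linearly independent `m`-tuple in `𝔽_q^n`, and
there are `∏_{i<m} (q^n - q^i)` of those; dividing by `q^(nm)` gives the product formula.
With `x = q⁻¹ ≤ 1/2` the product is at least `∏_{k=1}^{n} (1 - x^k)`, which stays above `1/4`.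
-/

open Finset

theorem Matrix.linearIndependent_col_iff_rank_eq_card {K m n : Type*} [Field K] [Fintype m]
    [Fintype n] (M : Matrix m n K) : LinearIndependent K M.col ↔ M.rank = Fintype.card n := by
  rw [M.rank_eq_finrank_span_cols, linearIndependent_iff_card_eq_finrank_span, eq_comm]
  rfl

theorem Matrix.natCard_rank_eq_width (K : Type*) [Field K] [Fintype K] {m n : ℕ} (hmn : m ≤ n) :
    Nat.card {M : Matrix (Fin n) (Fin m) K // M.rank = m} =
      ∏ i : Fin m, (Fintype.card K ^ n - Fintype.card K ^ (i : ℕ)) := by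
  have e : {M : Matrix (Fin n) (Fin m) K // M.rank = m} ≃
      {s : Fin m → Fin n → K // LinearIndependent K s} :=
    Equiv.subtypeEquiv (Matrix.transposeAddEquiv _ _ _).toEquiv fun M =>
      (M.linearIndependent_col_iff_rank_eq_card.trans (by rw [Fintype.card_fin])).symm
  rw [Nat.card_congr e, card_linearIndependent (by simpa using hmn), Module.finrank_fin_fun]

theorem prod_pow_sub_pow_div_pow_mul {K : Type*} [Field K] {x : K} (hx : x ≠ 0) {m n : ℕ}
    (hmn : m ≤ n) :
    (∏ i ∈ range m, (x ^ n - x ^ i)) / x ^ (n * m) = ∏ i ∈ range m, (1 - x⁻¹ ^ (n - i)) := by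
  rw [pow_mul, ← card_range m, ← prod_const, card_range, ← prod_div_distrib]
  refine prod_congr rfl fun i hi => ?_
  rw [sub_div, div_self (pow_ne_zero _ hx), inv_pow, pow_sub₀ _ hx (by grind), mul_inv_rev,
    inv_inv, div_eq_mul_inv]

-- The slack `x ^ (n + 2)` is what makes the induction close; it fails if started at the empty
-- product.
theorem quarter_add_pow_le_prod_one_sub_pow {x : ℝ} (hx0 : 0 ≤ x) (hx : x ≤ 1 / 2) (n : ℕ) :
    1 / 4 + x ^ (n + 2) ≤ ∏ k ∈ range (n + 1), (1 - x ^ (k + 1)) := by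
  induction n with
  | zero => rw [prod_range_one]; nlinarith
  | succ n ih =>
    rw [prod_range_succ]
    have hy : x ^ (n + 2) ≤ 1 / 4 := by
      calc x ^ (n + 2) ≤ x ^ 2 := pow_le_pow_of_le_one hx0 (by linarith) (by omega)
        _ ≤ (1 / 2) ^ 2 := by gcongr
        _ = 1 / 4 := by norm_num
    have hy0 : 0 ≤ x ^ (n + 2) := by positivity
    have : x ^ (n + 1 + 2) = x * x ^ (n + 2) := by ring
    rw [this]
    nlinarith [mul_le_mul_of_nonneg_right ih (by linarith : (0:ℝ) ≤ 1 - x ^ (n + 2))]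

theorem quarter_lt_prod_one_sub_pow {x : ℝ} (hx0 : 0 < x) (hx : x ≤ 1 / 2) (n : ℕ) :
    1 / 4 < ∏ k ∈ range n, (1 - x ^ (k + 1)) := by
  cases n with
  | zero => norm_num
  | succ n =>
    exact lt_of_lt_of_le (by linarith [pow_pos hx0 (n + 2)])
      (quarter_add_pow_le_prod_one_sub_pow hx0.le hx n)

theorem prod_one_sub_pow_le_prod_one_sub_pow_sub {x : ℝ} (hx0 : 0 ≤ x) (hx1 : x ≤ 1)
    {m n : ℕ} (hmn : m ≤ n) :
    ∏ k ∈ range n, (1 - x ^ (k + 1)) ≤ ∏ i ∈ range m, (1 - x ^ (n - i)) := by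
  have hfac : ∀ k, 0 ≤ 1 - x ^ k ∧ 1 - x ^ k ≤ 1 := fun k =>
    ⟨sub_nonneg.2 (pow_le_one₀ hx0 hx1), sub_le_self _ (pow_nonneg hx0 k)⟩
  calc ∏ k ∈ range n, (1 - x ^ (k + 1)) = ∏ i ∈ range n, (1 - x ^ (n - i)) := by
        rw [← prod_range_reflect]
        refine prod_congr rfl fun i hi => ?_
        rw [mem_range] at hi
        congr 2
        omega
    _ ≤ ∏ i ∈ range m, (1 - x ^ (n - i)) :=
        prod_le_prod_of_subset_of_le_one (range_subset_range.2 hmn) (fun i _ => (hfac _).1)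
          (fun i _ _ => (hfac _).2)

theorem fullRank_proportion_general (q m n : ℕ)
    (hmn : m ≤ n) (F : Type) [Field F] [Fintype F] (hF : Fintype.card F = q) :
    (Nat.card {M : Matrix (Fin n) (Fin m) F // M.rank = m} : ℝ) /
        (Fintype.card (Matrix (Fin n) (Fin m) F) : ℝ) =
      ∏ i ∈ Finset.Icc 1 m, (1 - ((q : ℝ) ^ (n - i + 1))⁻¹) ∧
    (∏ i ∈ Finset.Icc 1 m, (1 - ((q : ℝ) ^ (n - i + 1))⁻¹)) > 1 / 4 := by
  have hq : 2 ≤ q := hF ▸ Fintype.one_lt_card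
  have hx0 : 0 < (q : ℝ)⁻¹ := by positivity
  have hx : (q : ℝ)⁻¹ ≤ 1 / 2 := by rw [one_div]; exact inv_anti₀ two_pos (by exact_mod_cast hq)
  have hreindex : ∏ i ∈ Icc 1 m, (1 - ((q : ℝ) ^ (n - i + 1))⁻¹) =
      ∏ i ∈ range m, (1 - (q : ℝ)⁻¹ ^ (n - i)) := by
    rw [← Ico_add_one_right_eq_Icc, prod_Ico_eq_prod_range, Nat.add_sub_cancel]
    refine prod_congr rfl fun i hi => ?_
    rw [mem_range] at hi
    rw [inv_pow]
    congr 3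
    omega
  have hcard : Fintype.card (Matrix (Fin n) (Fin m) F) = q ^ (n * m) := by
    change Fintype.card (Fin n → Fin m → F) = _
    rw [Fintype.card_fun, Fintype.card_fun, Fintype.card_fin, Fintype.card_fin, hF, ← pow_mul,
      mul_comm]
  rw [hreindex]
  refine ⟨?_, (quarter_lt_prod_one_sub_pow hx0 hx n).trans_le
    (prod_one_sub_pow_le_prod_one_sub_pow_sub hx0.le (by linarith) hmn)⟩
  rw [← prod_pow_sub_pow_div_pow_mul (by positivity) hmn, Matrix.natCard_rank_eq_width F hmn, hF,
    hcard, Fin.prod_univ_eq_prod_range (fun i => q ^ n - q ^ i), Nat.cast_prod, Nat.cast_pow]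
  congr 1
  refine prod_congr rfl fun i hi => ?_
  rw [Nat.cast_sub (Nat.pow_le_pow_right (by omega) (by grind)), Nat.cast_pow, Nat.cast_pow]

/-- for a prime power `q` and `m ≤ n`, the proportion of full-rank
(`rank = m`) matrices among all `n × m` matrices over `𝔽_q` equals
`∏_{i=1}^{m} (1 - q^{-(n-i+1)})`, and this quantity is greater than `1/4`. -/
theorem fullRank_proportion (q p s m n : ℕ) (hp : p.Prime) (hs : 0 < s) (hq : q = p ^ s)
    (hmn : m ≤ n) (F : Type) [Field F] [Fintype F] (hF : Fintype.card F = q) :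
    (Nat.card {M : Matrix (Fin n) (Fin m) F // M.rank = m} : ℝ) /
        (Fintype.card (Matrix (Fin n) (Fin m) F) : ℝ) =
      ∏ i ∈ Finset.Icc 1 m, (1 - ((q : ℝ) ^ (n - i + 1))⁻¹) ∧
    (∏ i ∈ Finset.Icc 1 m, (1 - ((q : ℝ) ^ (n - i + 1))⁻¹)) > 1 / 4 :=
  fullRank_proportion_general q m n hmn F hF
end

section
/- Let $V, W$ be finite-dimensional vector spaces over a field $\mathbb{F}$, let $\lambda_1, \ldots, \lambda_r \in \mathbb{F} \setminus \{0\}$, and let $X_1, \ldots, X_r \colon W \to V$ be rank-one linear maps with $\sum_{i=1}^{r} \lambda_i X_i = 0$. Then $\dim\left(\sum_{i=1}^r \operatorname{Im}(X_i)\right) + \operatorname{codim}\left(\bigcap_{i=1}^r \ker(X_i)\right) \le r$. -/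
/-!
Put `Yᵢ = λᵢ Xᵢ`, so that `∑ Yᵢ = 0`. The map `w ↦ (Yᵢ w)ᵢ` from `W` to `∏ Im Yᵢ` has kernel
`⋂ ker Xᵢ`, and the summation map `∏ Im Yᵢ → V` has image `∑ Im Xᵢ`. Their composite is
`∑ Yᵢ = 0`, so the two ranks add up to at most `dim ∏ Im Yᵢ = r`.
-/

open Module

theorem LinearMap.range_lsum {R S ι M : Type*} {φ : ι → Type*} [Semiring R] [Semiring S]
    [Fintype ι] [DecidableEq ι] [AddCommMonoid M] [Module R M] [Module S M] [SMulCommClass R S M]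
    [∀ i, AddCommMonoid (φ i)] [∀ i, Module R (φ i)] (f : ∀ i, φ i →ₗ[R] M) :
    range (lsum R φ S f) = ⨆ i, range (f i) := by
  apply le_antisymm
  · rintro _ ⟨x, rfl⟩
    rw [lsum_apply, sum_apply]
    exact Submodule.sum_mem _ fun i _ => Submodule.mem_iSup_of_mem i (mem_range_self _ _)
  · refine iSup_le fun i => ?_
    rintro _ ⟨x, rfl⟩
    exact ⟨Pi.single i x, lsum_piSingle R φ S f i x⟩

section DivisionRing

variable {K U V W : Type*} [DivisionRing K] [AddCommGroup U] [Module K U]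
  [AddCommGroup V] [Module K V] [AddCommGroup W] [Module K W]

theorem LinearMap.finrank_range_add_finrank_range_le_of_comp_eq_zero [FiniteDimensional K V]
    {f : U →ₗ[K] V} {g : V →ₗ[K] W} (h : g ∘ₗ f = 0) :
    finrank K (range f) + finrank K (range g) ≤ finrank K V := by
  rw [← finrank_range_add_finrank_ker g, add_comm]
  exact Nat.add_le_add_left (Submodule.finrank_mono (range_le_ker_iff.mpr h)) _

theorem finrank_iSup_range_add_codim_iInf_ker_le_of_sum_eq_zero {ι : Type*} [Fintype ι]
    [FiniteDimensional K W] (Y : ι → W →ₗ[K] V) (hY : ∑ i, Y i = 0) :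
    finrank K (⨆ i, LinearMap.range (Y i) : Submodule K V) +
        (finrank K W - finrank K (⨅ i, LinearMap.ker (Y i) : Submodule K W)) ≤
      ∑ i, finrank K (LinearMap.range (Y i)) := by
  classical
  let toRanges : W →ₗ[K] Π i, LinearMap.range (Y i) := .pi fun i => (Y i).rangeRestrict
  let sumRanges : (Π i, LinearMap.range (Y i)) →ₗ[K] V :=
    LinearMap.lsum K _ ℕ fun i => (LinearMap.range (Y i)).subtype
  have hcomp : sumRanges ∘ₗ toRanges = 0 := by
    ext w
    simp [toRanges, sumRanges, ← LinearMap.sum_apply, hY]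
  have hker : LinearMap.ker toRanges = ⨅ i, LinearMap.ker (Y i) := by
    simp [toRanges, LinearMap.ker_pi]
  have hcodim : finrank K (LinearMap.range toRanges) =
      finrank K W - finrank K (⨅ i, LinearMap.ker (Y i) : Submodule K W) := by
    rw [← LinearMap.finrank_range_add_finrank_ker toRanges, hker, Nat.add_sub_cancel]
  have hrange : LinearMap.range sumRanges = ⨆ i, LinearMap.range (Y i) := by
    simp only [sumRanges, LinearMap.range_lsum, Submodule.range_subtype]
  calc _ = finrank K (LinearMap.range toRanges) + finrank K (LinearMap.range sumRanges) := by
        rw [hcodim, hrange, add_comm]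
    _ ≤ finrank K (Π i, LinearMap.range (Y i)) :=
        LinearMap.finrank_range_add_finrank_range_le_of_comp_eq_zero hcomp
    _ = _ := finrank_pi_fintype K

end DivisionRing

theorem rank_one_sum_rank_nullity_general (F : Type) [Field F]
    (V W : Type) [AddCommGroup V] [Module F V] [AddCommGroup W] [Module F W]
    [FiniteDimensional F W]
    (r : ℕ) (lam : Fin r → F) (X : Fin r → (W →ₗ[F] V))
    (hlam : ∀ i, lam i ≠ 0)
    (hrank : ∀ i, finrank F (LinearMap.range (X i)) = 1)
    (hsum : ∑ i, lam i • X i = 0) :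
    finrank F (⨆ i, LinearMap.range (X i) : Submodule F V) +
      (finrank F W - finrank F (⨅ i, LinearMap.ker (X i) : Submodule F W)) ≤ r := by
  have hrange i : LinearMap.range (lam i • X i) = LinearMap.range (X i) :=
    LinearMap.range_smul _ _ (hlam i)
  have hker i : LinearMap.ker (lam i • X i) = LinearMap.ker (X i) :=
    LinearMap.ker_smul _ _ (hlam i)
  have hrank' i : finrank F (LinearMap.range (lam i • X i)) = 1 := by rw [hrange, hrank]
  have key := finrank_iSup_range_add_codim_iInf_ker_le_of_sum_eq_zero (fun i => lam i • X i) hsum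
  rw [funext hrange, funext hker] at key
  simpa [hrank'] using key

/-- if `X₁, …, X_r : W → V` are rank-one linear maps with
`∑ λᵢ Xᵢ = 0` for nonzero scalars `λᵢ`, then
`dim (∑ Im Xᵢ) + codim (⋂ ker Xᵢ) ≤ r`. -/
theorem rank_one_sum_rank_nullity (F : Type) [Field F]
    (V W : Type) [AddCommGroup V] [Module F V] [AddCommGroup W] [Module F W]
    [FiniteDimensional F V] [FiniteDimensional F W]
    (r : ℕ) (lam : Fin r → F) (X : Fin r → (W →ₗ[F] V))
    (hlam : ∀ i, lam i ≠ 0)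
    (hrank : ∀ i, finrank F (LinearMap.range (X i)) = 1)
    (hsum : ∑ i, lam i • X i = 0) :
    finrank F (⨆ i, LinearMap.range (X i) : Submodule F V) +
      (finrank F W - finrank F (⨅ i, LinearMap.ker (X i) : Submodule F W)) ≤ r :=
  rank_one_sum_rank_nullity_general F V W r lam X hlam hrank hsum
end

section
/- Let $q$ be a prime power, let $V$ be an $n$-dimensional vector space over $\mathbb{F}_q$, let $U$ be a $k$-dimensional subspace of $V$, and suppose $d \in \mathbb{N}$ with $k + d \le n$. Then the number of $d$-dimensional subspaces $W$ of $V$ with $W \cap U = \{0\}$ equals $\prod_{i=1}^{d}(q^n - q^{k+i-1}) / \prod_{i=1}^{d}(q^d - q^{i-1})$, and this is at least $\frac{1}{4}{n \brack d}_q$. -/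
/-!
Count the `d`-tuples `v` in `V` whose image in `V ⧸ U` is linearly independent in two ways.
Choosing the image in the `(n - k)`-dimensional quotient and then its lifts gives
`∏ (q^(n-k) - q^i) · q^(kd) = ∏ (q^n - q^(k+i))` tuples. On the other hand these tuples are
exactly the ordered bases of the `d`-dimensional subspaces `W` with `W ⊓ U = ⊥`, and each such `W`
has `∏ (q^d - q^i)` of them.

For the bound, every factor `(q^n - q^(k+i)) / (q^d - q^i)` is at least `q^(n-d)`, while
`[n, d]_q ≤ q^(d(n-d)) / ∏_{j=1}^{d} (1 - q^(-j))` and `∏_{j ≥ 1} (1 - 2^(-j)) ≥ 1/4`.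
-/

open Module

/-- The Gaussian binomial coefficient `[m choose d]_q`, as a real number. -/
noncomputable def gaussBinom (q : ℝ) (m d : ℕ) : ℝ :=
  (∏ i ∈ Finset.range d, (q ^ (m - i) - 1)) / (∏ i ∈ Finset.range d, (q ^ (d - i) - 1))

open Submodule Finset

theorem Nat.card_eq_card_mul_of_card_fiber_eq {α β : Type*} [Finite α] [Finite β] (f : α → β)
    {m : ℕ} (hf : ∀ b, Nat.card {a // f a = b} = m) : Nat.card α = Nat.card β * m := by
  have := Fintype.ofFinite β
  rw [← Nat.card_congr (Equiv.sigmaFiberEquiv f), Nat.card_sigma]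
  simp [hf, Nat.card_eq_fintype_card]

theorem LinearMap.card_fiber_eq_card_ker {R M N : Type*} [Ring R] [AddCommGroup M]
    [AddCommGroup N] [Module R M] [Module R N] {f : M →ₗ[R] N} (hf : Function.Surjective f)
    (y : N) : Nat.card {x // f x = y} = Nat.card (LinearMap.ker f) :=
  Nat.card_congr (f.toAddMonoidHom.fiberEquivKerOfSurjective hf y)

theorem Submodule.linearIndependent_mkQ_comp_iff {R M ι : Type*} [Ring R] [AddCommGroup M]
    [Module R M] (U : Submodule R M) {v : ι → M} :
    LinearIndependent R (U.mkQ ∘ v) ↔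
      LinearIndependent R v ∧ Disjoint (span R (Set.range v)) U := by
  refine ⟨fun h => ⟨h.of_comp, ?_⟩, fun h => h.1.map ?_⟩
  · simpa using Submodule.range_ker_disjoint h
  · simpa using h.2

theorem Nat.cast_prod_pow_sub_pow {ι : Type*} {q : ℕ} (hq : 0 < q) {s : Finset ι} {a b : ι → ℕ}
    (h : ∀ i ∈ s, b i ≤ a i) :
    ((∏ i ∈ s, (q ^ a i - q ^ b i) : ℕ) : ℝ) = ∏ i ∈ s, ((q : ℝ) ^ a i - (q : ℝ) ^ b i) := by
  rw [Nat.cast_prod]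
  exact prod_congr rfl fun i hi => by
    rw [Nat.cast_sub (Nat.pow_le_pow_right hq (h i hi)), Nat.cast_pow, Nat.cast_pow]

section Counting

variable {F V : Type*} [Field F] [AddCommGroup V] [Module F V]

theorem card_linearIndependent_mkQ_comp (U : Submodule F V) (d : ℕ) [Finite V] :
    Nat.card {v : Fin d → V // LinearIndependent F (U.mkQ ∘ v)} =
      Nat.card {u : Fin d → V ⧸ U // LinearIndependent F u} * Nat.card U ^ d := by
  have : Finite (V ⧸ U) := Quotient.finite _
  refine Nat.card_eq_card_mul_of_card_fiber_eq (fun v => ⟨U.mkQ ∘ v.1, v.2⟩) fun u => ?_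
  let e : {v : {v : Fin d → V // LinearIndependent F (U.mkQ ∘ v)} //
      (⟨U.mkQ ∘ v.1, v.2⟩ : {u : Fin d → V ⧸ U // LinearIndependent F u}) = u} ≃
      ∀ i, {x : V // U.mkQ x = u.1 i} :=
    { toFun := fun v i => ⟨v.1.1 i, congrFun (congrArg Subtype.val v.2) i⟩
      invFun := fun w => ⟨⟨fun i => w i, by convert u.2; ext i; exact (w i).2⟩,
        Subtype.ext <| funext fun i => (w i).2⟩
      left_inv := fun v => rfl
      right_inv := fun w => rfl }
  rw [Nat.card_congr e, Nat.card_pi]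
  simp only [LinearMap.card_fiber_eq_card_ker U.mkQ_surjective, U.ker_mkQ, prod_const, card_univ,
    Fintype.card_fin]

theorem card_linearIndependent_span_eq [FiniteDimensional F V] {W : Submodule F V} {d : ℕ}
    (hW : finrank F W = d) :
    Nat.card {v : Fin d → V // LinearIndependent F v ∧ span F (Set.range v) = W} =
      Nat.card {w : Fin d → W // LinearIndependent F w} := by
  refine Nat.card_congr
    { toFun := fun v => ⟨fun i => ⟨v.1 i, v.2.2.le (subset_span (Set.mem_range_self i))⟩,
        .of_comp W.subtype v.2.1⟩
      invFun := fun w => ⟨fun i => w.1 i, w.2.map' W.subtype W.ker_subtype, ?_⟩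
      left_inv := fun v => rfl
      right_inv := fun w => rfl }
  have hw : LinearIndependent F fun i => (w.1 i : V) := w.2.map' W.subtype W.ker_subtype
  refine eq_of_le_of_finrank_eq (span_le.2 <| Set.range_subset_iff.2 fun i => (w.1 i).2) ?_
  rw [finrank_span_eq_card hw, Fintype.card_fin, hW]

section FiniteField

variable [Fintype F]

local notation "q" => Fintype.card F

theorem card_linearIndependent_eq_prod [Finite V] {d : ℕ} (hd : d ≤ finrank F V) :
    Nat.card {v : Fin d → V // LinearIndependent F v} =
      ∏ i ∈ range d, (q ^ finrank F V - q ^ i) := by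
  rw [card_linearIndependent hd, Fin.prod_univ_eq_prod_range (fun i => q ^ finrank F V - q ^ i)]

theorem card_linearIndependent_mkQ_comp_eq_prod [Finite V] (U : Submodule F V) {d : ℕ}
    (hd : finrank F U + d ≤ finrank F V) :
    Nat.card {v : Fin d → V // LinearIndependent F (U.mkQ ∘ v)} =
      ∏ i ∈ range d, (q ^ finrank F V - q ^ (finrank F U + i)) := by
  have : Finite (V ⧸ U) := Quotient.finite _
  have hQ : finrank F (V ⧸ U) = finrank F V - finrank F U := by
    rw [← U.finrank_quotient_add_finrank, Nat.add_sub_cancel]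
  have hU : (q ^ finrank F U) ^ d = ∏ _i ∈ range d, q ^ finrank F U := by
    rw [prod_const, card_range]
  rw [card_linearIndependent_mkQ_comp, card_linearIndependent_eq_prod (by omega),
    natCard_eq_pow_finrank (K := F), Nat.card_eq_fintype_card, hU, ← prod_mul_distrib, hQ]
  refine prod_congr rfl fun i _ => ?_
  rw [Nat.sub_mul, ← pow_add, ← pow_add, Nat.sub_add_cancel (by omega), add_comm i]

theorem card_linearIndependent_mkQ_comp_eq_card_mul [Finite V] (U : Submodule F V) (d : ℕ) :
    Nat.card {v : Fin d → V // LinearIndependent F (U.mkQ ∘ v)} =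
      Nat.card {W : Submodule F V // finrank F W = d ∧ W ⊓ U = ⊥} *
        ∏ i ∈ range d, (q ^ d - q ^ i) := by
  have : Finite (Submodule F V) := .of_injective _ SetLike.coe_injective
  have hspan (v : {v : Fin d → V // LinearIndependent F (U.mkQ ∘ v)}) :
      finrank F (span F (Set.range v.1)) = d ∧ span F (Set.range v.1) ⊓ U = ⊥ := by
    obtain ⟨hv, hdisj⟩ := U.linearIndependent_mkQ_comp_iff.1 v.2
    exact ⟨by rw [finrank_span_eq_card hv, Fintype.card_fin], disjoint_iff.1 hdisj⟩
  refine Nat.card_eq_card_mul_of_card_fiber_eq (fun v => ⟨span F (Set.range v.1), hspan v⟩)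
    fun W => ?_
  let e : {v : {v : Fin d → V // LinearIndependent F (U.mkQ ∘ v)} //
        (⟨span F (Set.range v.1), hspan v⟩ : {W : Submodule F V // finrank F W = d ∧ W ⊓ U = ⊥})
          = W} ≃
      {v : Fin d → V // LinearIndependent F v ∧ span F (Set.range v) = W.1} :=
    { toFun := fun v => ⟨v.1.1, v.1.2.of_comp, congrArg Subtype.val v.2⟩
      invFun := fun v => ⟨⟨v.1, U.linearIndependent_mkQ_comp_iff.2
          ⟨v.2.1, by rw [v.2.2]; exact disjoint_iff.2 W.2.2⟩⟩, Subtype.ext v.2.2⟩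
      left_inv := fun v => rfl
      right_inv := fun v => rfl }
  rw [Nat.card_congr e, card_linearIndependent_span_eq W.2.1,
    card_linearIndependent_eq_prod W.2.1.ge, W.2.1]

theorem card_disjoint_subspaces_eq_div [Finite V] (U : Submodule F V) {d : ℕ}
    (hd : finrank F U + d ≤ finrank F V) :
    (Nat.card {W : Submodule F V // finrank F W = d ∧ W ⊓ U = ⊥} : ℝ) =
      (∏ i ∈ range d, ((q : ℝ) ^ finrank F V - (q : ℝ) ^ (finrank F U + i))) /
        ∏ i ∈ range d, ((q : ℝ) ^ d - (q : ℝ) ^ i) := by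
  have hq : 0 < q := Fintype.card_pos
  rw [eq_div_iff (prod_pos fun i hi => sub_pos.2 <| pow_lt_pow_right₀
      (by exact_mod_cast Fintype.one_lt_card) (mem_range.1 hi)).ne',
    ← Nat.cast_prod_pow_sub_pow hq (a := fun _ => d) fun i hi => (mem_range.1 hi).le,
    ← Nat.cast_prod_pow_sub_pow hq (a := fun _ => finrank F V) fun i hi => by
      have := mem_range.1 hi; omega,
    ← Nat.cast_mul, ← card_linearIndependent_mkQ_comp_eq_card_mul,
    card_linearIndependent_mkQ_comp_eq_prod U hd]

end FiniteField

end Counting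

theorem one_quarter_le_prod_one_sub_pow {x : ℝ} (hx₀ : 0 ≤ x) (hx : x ≤ 1 / 2) (d : ℕ) :
    1 / 4 ≤ ∏ i ∈ range d, (1 - x ^ (d - i)) := by
  have hx2 : x ^ 2 ≤ 1 / 4 := by nlinarith
  -- The slack `x ^ (d + 2)` propagates only while it is at most `1 / 4`, i.e. not from the
  -- empty product.
  have key : ∀ d : ℕ, 1 / 4 + x ^ (d + 2) ≤ ∏ i ∈ range (d + 1), (1 - x ^ (d + 1 - i)) := by
    intro d
    induction d with
    | zero => norm_num; nlinarith
    | succ d ih =>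
      rw [prod_range_succ']
      simp only [Nat.add_sub_add_right, Nat.sub_zero]
      have hy : x ^ (d + 2) ≤ 1 / 4 :=
        (pow_le_pow_of_le_one hx₀ (by linarith) (by omega)).trans hx2
      have hpow : x ^ (d + 1 + 2) = x ^ (d + 2) * x := pow_succ x (d + 2)
      nlinarith [mul_le_mul_of_nonneg_right ih (by linarith : 0 ≤ 1 - x ^ (d + 2)),
        pow_nonneg hx₀ (d + 2)]
  cases d with
  | zero => norm_num
  | succ d => linarith [key d, pow_nonneg hx₀ (d + 2)]

theorem gaussBinom_le {q : ℝ} (hq : 2 ≤ q) {n d : ℕ} (hdn : d ≤ n) :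
    gaussBinom q n d ≤ 4 * q ^ (d * (n - d)) := by
  have hq₀ : 0 < q := by linarith
  have hden : 1 / 4 * ∏ i ∈ range d, q ^ (d - i) ≤ ∏ i ∈ range d, (q ^ (d - i) - 1) := by
    calc 1 / 4 * ∏ i ∈ range d, q ^ (d - i)
        ≤ (∏ i ∈ range d, (1 - q⁻¹ ^ (d - i))) * ∏ i ∈ range d, q ^ (d - i) := by
          gcongr
          exact one_quarter_le_prod_one_sub_pow (by positivity)
            (by rw [inv_le_comm₀ hq₀ (by norm_num)]; linarith) d
      _ = ∏ i ∈ range d, (q ^ (d - i) - 1) := by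
          rw [← prod_mul_distrib]
          refine prod_congr rfl fun i _ => ?_
          rw [inv_pow, sub_mul, inv_mul_cancel₀ (by positivity), one_mul]
  have hnum :
      ∏ i ∈ range d, (q ^ (n - i) - 1) ≤ q ^ (d * (n - d)) * ∏ i ∈ range d, q ^ (d - i) := by
    calc ∏ i ∈ range d, (q ^ (n - i) - 1) ≤ ∏ i ∈ range d, q ^ (n - i) :=
          prod_le_prod (fun i _ => sub_nonneg.2 (one_le_pow₀ (by linarith)))
            fun i _ => sub_le_self _ zero_le_one
      _ = ∏ i ∈ range d, (q ^ (n - d) * q ^ (d - i)) :=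
          prod_congr rfl fun i hi => by rw [← pow_add]; congr 1; have := mem_range.1 hi; omega
      _ = q ^ (d * (n - d)) * ∏ i ∈ range d, q ^ (d - i) := by
          rw [prod_mul_distrib, prod_const, card_range, pow_mul']
  have hpos : 0 < 1 / 4 * ∏ i ∈ range d, q ^ (d - i) := by positivity
  rw [gaussBinom, div_le_iff₀ (hpos.trans_le hden)]
  calc _ ≤ q ^ (d * (n - d)) * ∏ i ∈ range d, q ^ (d - i) := hnum
    _ = 4 * q ^ (d * (n - d)) * (1 / 4 * ∏ i ∈ range d, q ^ (d - i)) := by ring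
    _ ≤ 4 * q ^ (d * (n - d)) * ∏ i ∈ range d, (q ^ (d - i) - 1) := by gcongr

theorem pow_le_prod_pow_sub_pow_div_prod {q : ℝ} (hq : 1 < q) {n k d : ℕ} (hkd : k + d ≤ n) :
    q ^ (d * (n - d)) ≤
      (∏ i ∈ range d, (q ^ n - q ^ (k + i))) / ∏ i ∈ range d, (q ^ d - q ^ i) := by
  rw [le_div_iff₀ (prod_pos fun i hi => sub_pos.2 (pow_lt_pow_right₀ hq (mem_range.1 hi)))]
  calc q ^ (d * (n - d)) * ∏ i ∈ range d, (q ^ d - q ^ i)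
      = ∏ i ∈ range d, (q ^ (n - d) * (q ^ d - q ^ i)) := by
        rw [prod_mul_distrib, prod_const, card_range, pow_mul']
    _ ≤ ∏ i ∈ range d, (q ^ n - q ^ (k + i)) := by
        refine prod_le_prod (fun i hi => ?_) fun i _ => ?_
        · have := pow_le_pow_right₀ hq.le (mem_range.1 hi).le
          exact mul_nonneg (by positivity) (sub_nonneg.2 this)
        · rw [mul_sub, ← pow_add, ← pow_add, Nat.sub_add_cancel (by omega : d ≤ n)]
          gcongr
          · exact hq.le
          · omega

theorem card_complementary_subspaces_general (q n k d : ℕ) (hkd : k + d ≤ n)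
    (F : Type) [Field F] [Fintype F] (hF : Fintype.card F = q)
    (V : Type) [AddCommGroup V] [Module F V] [FiniteDimensional F V]
    (hV : finrank F V = n) (U : Submodule F V) (hU : finrank F U = k) :
    (Nat.card {W : Submodule F V // finrank F W = d ∧ W ⊓ U = ⊥} : ℝ) =
      (∏ i ∈ Finset.range d, ((q : ℝ) ^ n - (q : ℝ) ^ (k + i))) /
        (∏ i ∈ Finset.range d, ((q : ℝ) ^ d - (q : ℝ) ^ i)) ∧
    (Nat.card {W : Submodule F V // finrank F W = d ∧ W ⊓ U = ⊥} : ℝ) ≥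
      (1 / 4) * gaussBinom (q : ℝ) n d := by
  have : Finite V := Module.finite_of_finite F
  have hcard := card_disjoint_subspaces_eq_div U (d := d) (by omega)
  rw [hF, hV, hU] at hcard
  have hq : (2 : ℝ) ≤ q := by exact_mod_cast hF ▸ Fintype.one_lt_card (α := F)
  refine ⟨hcard, ?_⟩
  rw [hcard, ge_iff_le]
  calc 1 / 4 * gaussBinom q n d ≤ (q : ℝ) ^ (d * (n - d)) := by
        linarith [gaussBinom_le hq (show d ≤ n by omega)]
    _ ≤ _ := pow_le_prod_pow_sub_pow_div_prod (by linarith) hkd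

/-- if `V` is an `n`-dimensional space over `𝔽_q`, `U ≤ V` is
`k`-dimensional, and `k + d ≤ n`, the number of `d`-dimensional subspaces `W`
with `W ∩ U = {0}` equals `∏_{i=1}^{d}(q^n - q^{k+i-1}) / ∏_{i=1}^{d}(q^d - q^{i-1})`,
and is at least `(1/4) [n choose d]_q`. -/
theorem card_complementary_subspaces (q p s n k d : ℕ) (hp : p.Prime) (hs : 0 < s)
    (hq : q = p ^ s) (hkd : k + d ≤ n)
    (F : Type) [Field F] [Fintype F] (hF : Fintype.card F = q)
    (V : Type) [AddCommGroup V] [Module F V] [FiniteDimensional F V]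
    (hV : finrank F V = n) (U : Submodule F V) (hU : finrank F U = k) :
    (Nat.card {W : Submodule F V // finrank F W = d ∧ W ⊓ U = ⊥} : ℝ) =
      (∏ i ∈ Finset.range d, ((q : ℝ) ^ n - (q : ℝ) ^ (k + i))) /
        (∏ i ∈ Finset.range d, ((q : ℝ) ^ d - (q : ℝ) ^ i)) ∧
    (Nat.card {W : Submodule F V // finrank F W = d ∧ W ⊓ U = ⊥} : ℝ) ≥
      (1 / 4) * gaussBinom (q : ℝ) n d :=
  card_complementary_subspaces_general q n k d hkd F hF V hV U hU
end

section
/- Let $q$ be a prime power and $V = \mathbb{F}_q^n$. If $\mathcal{F} \subset \mathrm{GL}(V)$ is 1-intersecting, i.e., for all $\sigma_1, \sigma_2 \in \mathcal{F}$ there exists a nonzero $v \in V$ with $\sigma_1(v) = \sigma_2(v)$, then $|\mathcal{F}| \le |\mathrm{GL}(\mathbb{F}_q^n)| / (q^n - 1)$. -/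
/-!
Let `K` be the extension of `𝔽_q` of degree `n` and identify `V` with `K`. Multiplication by the
units of `K` gives a subgroup `H ≤ GL(V)` of order `q ^ n - 1` (a Singer cycle) in which only the
identity fixes a nonzero vector. If `σ₁, σ₂ ∈ 𝓕` lie in the same left coset of `H` and agree on
`v ≠ 0`, then `σ₁⁻¹ σ₂ ∈ H` fixes `v`, so `σ₁ = σ₂`. Hence `|𝓕| ≤ [GL(V) : H]`.
-/

open Finset

section Coset

variable {G X : Type*} [Group G] [MulAction G X] {H : Subgroup G} {S : Set X}

theorem QuotientGroup.injOn_mk_of_forall_exists_smul_eq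
    (hfree : ∀ h ∈ H, ∀ x ∈ S, h • x = x → h = 1) {A : Set G}
    (hA : ∀ a ∈ A, ∀ b ∈ A, ∃ x ∈ S, a • x = b • x) :
    Set.InjOn (QuotientGroup.mk : G → G ⧸ H) A := by
  intro a ha b hb hab
  obtain ⟨x, hxS, hx⟩ := hA a ha b hb
  have hfix : (a⁻¹ * b) • x = x := by rw [mul_smul, ← hx, inv_smul_smul]
  exact inv_mul_eq_one.mp (hfree _ (QuotientGroup.eq.mp hab) x hxS hfix)

theorem Finset.card_mul_card_subgroup_le_of_forall_exists_smul_eq [Finite G]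
    (hfree : ∀ h ∈ H, ∀ x ∈ S, h • x = x → h = 1) (A : Finset G)
    (hA : ∀ a ∈ A, ∀ b ∈ A, ∃ x ∈ S, a • x = b • x) :
    #A * Nat.card H ≤ Nat.card G :=
  calc #A * Nat.card H = Nat.card (A : Set G) * Nat.card H := by
        rw [Nat.card_coe_set_eq, Set.ncard_coe_finset]
    _ ≤ H.index * Nat.card H := by
      gcongr
      exact Nat.card_le_card_of_injective _
        (QuotientGroup.injOn_mk_of_forall_exists_smul_eq hfree hA).injective
    _ = Nat.card G := H.index_mul_card

end Coset

section Singer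

variable {F K V : Type*} [Field F] [Field K] [Algebra F K] [AddCommGroup V] [Module F V]

noncomputable def singerHom (e : K ≃ₗ[F] V) : Kˣ →* LinearMap.GeneralLinearGroup F V :=
  (Units.map (e.conjAlgEquiv F).toMonoidHom).comp (Units.map (Algebra.lmul F K).toMonoidHom)

theorem singerHom_smul (e : K ≃ₗ[F] V) (c : Kˣ) (v : V) :
    singerHom e c • v = e (c * e.symm v) := rfl

theorem singerHom_injective (e : K ≃ₗ[F] V) : Function.Injective (singerHom e) :=
  fun c d h ↦ Units.ext <| by
    simpa [singerHom_smul] using congrArg (fun g ↦ e.symm (g • e 1)) h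

theorem eq_one_of_singerHom_smul_eq (e : K ≃ₗ[F] V) {c : Kˣ} {v : V} (hv : v ≠ 0)
    (h : singerHom e c • v = v) : c = 1 := by
  rw [singerHom_smul, ← e.eq_symm_apply] at h
  exact Units.val_eq_one.mp ((mul_eq_right₀ (by simpa using hv)).mp h)

end Singer

namespace LinearMap.GeneralLinearGroup

theorem natCard_eq_natCard_bijective (F V : Type*) [Field F] [AddCommGroup V] [Module F V] :
    Nat.card (GeneralLinearGroup F V) = Nat.card {σ : Module.End F V // Function.Bijective σ} :=
  Nat.card_congr <| Submonoid.unitsTypeEquivIsUnitSubmonoid.toEquiv.trans <|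
    Equiv.subtypeEquivRight fun σ ↦ (IsUnit.mem_submonoid_iff σ).trans (Module.End.isUnit_iff σ)

theorem card_mul_le_natCard_of_forall_exists_smul_eq {F V : Type*} [Field F] [Finite F]
    [AddCommGroup V] [Module F V] [FiniteDimensional F V] (A : Finset (GeneralLinearGroup F V))
    (hA : ∀ a ∈ A, ∀ b ∈ A, ∃ v : V, v ≠ 0 ∧ a • v = b • v) :
    #A * (Nat.card F ^ Module.finrank F V - 1) ≤ Nat.card (GeneralLinearGroup F V) := by
  obtain ⟨p, _⟩ := CharP.exists F
  have : Fact p.Prime := ⟨CharP.char_is_prime F p⟩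
  obtain hn | hn := eq_or_ne (Module.finrank F V) 0
  · simp [hn]
  have : NeZero (Module.finrank F V) := ⟨hn⟩
  let e := LinearEquiv.ofFinrankEq _ V (FiniteField.finrank_extension F p (Module.finrank F V))
  have hcard : Nat.card (singerHom e).range = Nat.card F ^ Module.finrank F V - 1 := by
    rw [← Nat.card_congr (MonoidHom.ofInjective (singerHom_injective e)).toEquiv,
      Nat.card_units, FiniteField.natCard_extension]
  have hfree : ∀ h ∈ (singerHom e).range, ∀ v ∈ {v : V | v ≠ 0}, h • v = v → h = 1 := by
    rintro _ ⟨c, rfl⟩ v hv h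
    rw [eq_one_of_singerHom_smul_eq e hv h, map_one]
  have : Finite V := Module.finite_of_finite F
  have : Finite (Module.End F V) := DFunLike.finite _
  rw [← hcard]
  exact A.card_mul_card_subgroup_le_of_forall_exists_smul_eq hfree hA

end LinearMap.GeneralLinearGroup

theorem one_intersecting_bound_general (q n : ℕ)
    (F : Type) [Field F] [Fintype F] (hF : Fintype.card F = q)
    (𝓕 : Finset ((Fin n → F) →ₗ[F] (Fin n → F)))
    (hbij : ∀ σ ∈ 𝓕, Function.Bijective σ)
    (hint : ∀ σ₁ ∈ 𝓕, ∀ σ₂ ∈ 𝓕, ∃ v : Fin n → F, v ≠ 0 ∧ σ₁ v = σ₂ v) :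
    𝓕.card * (q ^ n - 1) ≤
      Nat.card {σ : (Fin n → F) →ₗ[F] (Fin n → F) // Function.Bijective σ} := by
  classical
  let A := 𝓕.preimage Units.val Units.val_injective.injOn
  have hA : #A = #𝓕 := by
    rw [card_preimage, filter_true_of_mem]
    exact fun σ hσ ↦ (Module.End.isUnit_iff σ).mpr (hbij σ hσ)
  have key := LinearMap.GeneralLinearGroup.card_mul_le_natCard_of_forall_exists_smul_eq A
    fun a ha b hb ↦ hint _ (mem_preimage.mp ha) _ (mem_preimage.mp hb)
  rwa [hA, LinearMap.GeneralLinearGroup.natCard_eq_natCard_bijective, Module.finrank_fin_fun,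
    Nat.card_eq_fintype_card, hF] at key

/-- if `𝓕 ⊆ GL(𝔽_q^n)` is 1-intersecting (any two of its elements agree
on some nonzero vector), then `|𝓕| ≤ |GL(𝔽_q^n)| / (q^n - 1)`. -/
theorem one_intersecting_bound (q p s n : ℕ) (hp : p.Prime) (hs : 0 < s) (hq : q = p ^ s)
    (F : Type) [Field F] [Fintype F] (hF : Fintype.card F = q)
    (𝓕 : Finset ((Fin n → F) →ₗ[F] (Fin n → F)))
    (hbij : ∀ σ ∈ 𝓕, Function.Bijective σ)
    (hint : ∀ σ₁ ∈ 𝓕, ∀ σ₂ ∈ 𝓕, ∃ v : Fin n → F, v ≠ 0 ∧ σ₁ v = σ₂ v) :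
    𝓕.card * (q ^ n - 1) ≤
      Nat.card {σ : (Fin n → F) →ₗ[F] (Fin n → F) // Function.Bijective σ} :=
  one_intersecting_bound_general q n F hF 𝓕 hbij hint
end
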